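/- arXiv:2101.10984 — 2 statements merged into one kernel-verified Lean document; each statement's English description precedes it below -/
import Mathlib

section
/- Let G be a group isomorphic to Z^2 acting on the real line by orientation-preserving homeomorphisms. Suppose there are sequences (x_i) in R and (g_i) in G such that: g_i(x_i) → +∞; each g_i has a fixed point z_i with z_i ≤ x_i; the distances |z_i − x_i| converge to 0; and z_i converges to a point z_0 ∈ R. Then z_0 is a global fixed point of the action of G. -/
open Filter Topology

/-- **Global fixed point for a `ℤ²` action on `ℝ`.**
Let `G` be a group isomorphic to `ℤ²` acting on the real line by
orientation-preserving homeomorphisms (order isomorphisms of `ℝ`).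
Suppose there are sequences `(xᵢ)` in `ℝ` and `(gᵢ)` in `G` such that
`gᵢ(xᵢ) → +∞`, each `gᵢ` has a fixed point `zᵢ ≤ xᵢ`, `|zᵢ - xᵢ| → 0`,
and `zᵢ → z₀`. Then `z₀` is a global fixed point of the action of `G`. -/
theorem global_fixed_point_of_Z2_action
    {G : Type*} [Group G] (e : G ≃* Multiplicative (ℤ × ℤ))
    (ρ : G →* (ℝ ≃o ℝ))
    (x : ℕ → ℝ) (g : ℕ → G) (z : ℕ → ℝ)
    (hgx : Tendsto (fun i => ρ (g i) (x i)) atTop atTop)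
    (hfix : ∀ i, ρ (g i) (z i) = z i)
    (hle : ∀ i, z i ≤ x i)
    (hdist : Tendsto (fun i => |z i - x i|) atTop (𝓝 0))
    (z0 : ℝ) (hz : Tendsto z atTop (𝓝 z0)) :
    ∀ γ : G, ρ γ z0 = z0 := by
  have hcomm : ∀ a b : G, a * b = b * a := fun a b =>
    e.injective (by simp [map_mul, mul_comm])
  have hxz : Tendsto x atTop (𝓝 z0) := by
    have h1 : Tendsto (fun i => z i - x i) atTop (𝓝 0) := by
      rwa [tendsto_zero_iff_abs_tendsto_zero]
    have h2 := hz.sub h1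
    simpa using h2
  have key : ∀ γ : G, ρ γ z0 ≤ z0 := by
    intro γ
    by_contra hlt
    push_neg at hlt
    have hcont : Tendsto (fun i => ρ γ (z i)) atTop (𝓝 (ρ γ z0)) :=
      ((ρ γ).continuous.tendsto z0).comp hz
    have hev1 : ∀ᶠ i in atTop, x i < ρ γ (z i) := hxz.eventually_lt hcont hlt
    have hev2 : ∀ᶠ i in atTop, ρ γ (z i) < ρ γ z0 + 1 :=
      hcont.eventually_lt tendsto_const_nhds (by linarith)
    have hev3 : ∀ᶠ i in atTop, ρ γ z0 + 1 < ρ (g i) (x i) :=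
      hgx.eventually_gt_atTop _
    obtain ⟨i, h1, h2, h3⟩ := (hev1.and (hev2.and hev3)).exists
    have hfix' : ρ (g i) (ρ γ (z i)) = ρ γ (z i) := by
      have e1 : ρ (g i) (ρ γ (z i)) = ρ (g i * γ) (z i) := by rw [map_mul]; rfl
      have e2 : ρ (γ * g i) (z i) = ρ γ (ρ (g i) (z i)) := by rw [map_mul]; rfl
      rw [e1, hcomm, e2, hfix]
    have hmono : ρ (g i) (x i) ≤ ρ (g i) (ρ γ (z i)) := (ρ (g i)).monotone h1.le
    rw [hfix'] at hmono
    linarith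
  intro γ
  have h1 := key γ
  have h2 := key γ⁻¹
  have h3 : z0 ≤ ρ γ z0 := by
    have h4 := (ρ γ).monotone h2
    have h5 : ρ γ (ρ γ⁻¹ z0) = z0 := by
      have e1 : ρ γ (ρ γ⁻¹ z0) = ρ (γ * γ⁻¹) z0 := by rw [map_mul]; rfl
      rw [e1, mul_inv_cancel, map_one]; rfl
    rwa [h5] at h4
  linarith
end

section
/- A group isomorphic to Z^2 cannot act freely and properly discontinuously by homeomorphisms on the real line R. -/
/-- A fixed-point-free homeomorphism of `ℝ` moves all points in the same direction. -/
private lemma homeo_sign_lemma (g : ℝ ≃ₜ ℝ) (hg : ∀ t : ℝ, g t ≠ t) :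
    (∀ t : ℝ, t < g t) ∨ (∀ t : ℝ, g t < t) := by
  by_contra h
  push_neg at h
  obtain ⟨⟨t₁, h₁⟩, ⟨t₂, h₂⟩⟩ := h
  have hc : Continuous fun t : ℝ => g t - t := g.continuous.sub continuous_id
  have h0 : (0:ℝ) ∈ Set.Icc (g t₁ - t₁) (g t₂ - t₂) := ⟨by linarith, by linarith⟩
  obtain ⟨t, ht⟩ := intermediate_value_univ t₁ t₂ hc h0
  have ht' : g t - t = 0 := ht
  exact hg t (by linarith)

/-- **`ℤ²` has no free properly discontinuous action on `ℝ`.**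
A group isomorphic to `ℤ²` cannot act freely and properly discontinuously
by homeomorphisms on the real line: for any action `ρ` of such a group `G`
on `ℝ` by homeomorphisms that is free (no nonidentity element has a fixed
point) and properly discontinuous (for every compact `K ⊆ ℝ`, only finitely
many `g ∈ G` satisfy `g(K) ∩ K ≠ ∅`), we get a contradiction. -/
theorem no_free_properly_discontinuous_Z2_action_on_R
    {G : Type*} [Group G] (e : G ≃* Multiplicative (ℤ × ℤ))
    (ρ : G → (ℝ ≃ₜ ℝ))
    (hhom : ∀ g h : G, ∀ t : ℝ, ρ (g * h) t = ρ g (ρ h t))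
    (hfree : ∀ g : G, g ≠ 1 → ∀ t : ℝ, ρ g t ≠ t)
    (hpd : ∀ K : Set ℝ, IsCompact K →
      {g : G | ((ρ g '' K) ∩ K).Nonempty}.Finite) :
    False := by
  classical
  -- transport the action to `ℤ × ℤ`
  set φ : ℤ × ℤ → G := fun v => e.symm (Multiplicative.ofAdd v) with hφ
  have hφinj : Function.Injective φ := fun v w h => by
    simpa using e.symm.injective h
  set f : ℤ × ℤ → (ℝ ≃ₜ ℝ) := fun v => ρ (φ v) with hf
  have hadd : ∀ v w : ℤ × ℤ, ∀ t : ℝ, f (v + w) t = f v (f w t) := by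
    intro v w t
    have : φ (v + w) = φ v * φ w := by
      simp [hφ, ofAdd_add, map_mul]
    simp only [hf, this]
    exact hhom _ _ t
  have hφ1 : ∀ v : ℤ × ℤ, v ≠ 0 → φ v ≠ 1 := by
    intro v hv h
    apply hv
    have : φ v = φ 0 := by simpa [hφ] using h
    exact hφinj this
  have hfree' : ∀ v : ℤ × ℤ, v ≠ 0 → ∀ t : ℝ, f v t ≠ t := by
    intro v hv t
    exact hfree _ (hφ1 v hv) t
  -- `f 0 = id`
  have f0 : ∀ t : ℝ, f 0 t = t := by
    intro t
    have h := hadd 0 0 t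
    rw [add_zero] at h
    exact ((f 0).injective h.symm)
  set τ : ℤ × ℤ → ℝ := fun v => f v 0 with hτ
  have τ0 : τ 0 = 0 := f0 0
  -- injectivity of τ
  have τinj : ∀ v w : ℤ × ℤ, τ v = τ w → v = w := by
    intro v w h
    by_contra hne
    have hsub : v - w ≠ 0 := sub_ne_zero.2 hne
    have : f (v - w) (f w 0) = f v 0 := by
      rw [← hadd, sub_add_cancel]
    refine hfree' _ hsub (f w 0) ?_
    rw [this]
    exact h
  -- sign dichotomy in terms of τ
  have sign_pos : ∀ v : ℤ × ℤ, v ≠ 0 → ¬ (∀ t : ℝ, f v t < t) → ∀ t : ℝ, t < f v t := by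
    intro v hv h
    rcases homeo_sign_lemma (f v) (hfree' v hv) with h1 | h2
    · exact h1
    · exact absurd h2 h
  have pos_all : ∀ v : ℤ × ℤ, 0 < τ v → ∀ t : ℝ, t < f v t := by
    intro v hv
    have hv0 : v ≠ 0 := fun h => by rw [h, τ0] at hv; exact lt_irrefl 0 hv
    refine sign_pos v hv0 (fun h => ?_)
    exact absurd (h 0) (not_lt.2 (le_of_lt hv))
  -- finiteness of orbit intervals
  have hfin : ∀ c : ℝ, {v : ℤ × ℤ | 0 ≤ τ v ∧ τ v ≤ c}.Finite := by
    intro c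
    have hK : IsCompact (Set.Icc (0:ℝ) c) := isCompact_Icc
    have hsub : {v : ℤ × ℤ | 0 ≤ τ v ∧ τ v ≤ c} ⊆
        φ ⁻¹' {g : G | ((ρ g '' Set.Icc (0:ℝ) c) ∩ Set.Icc (0:ℝ) c).Nonempty} := by
      intro v ⟨h1, h2⟩
      refine ⟨τ v, ⟨⟨0, ⟨le_refl 0, le_trans h1 h2⟩, rfl⟩, h1, h2⟩⟩
    exact ((hpd _ hK).preimage (hφinj.injOn)).subset hsub
  -- a positive element exists
  have hexpos : ∃ v : ℤ × ℤ, 0 < τ v := by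
    set a : ℤ × ℤ := ((1:ℤ), (0:ℤ)) with ha
    have ha0 : a ≠ 0 := by simp [ha]
    rcases lt_trichotomy (τ a) 0 with h | h | h
    · refine ⟨-a, ?_⟩
      have hna : -a ≠ 0 := neg_ne_zero.2 ha0
      have key : f (-a) (τ a) = 0 := by
        rw [hτ, ← hadd, neg_add_cancel, f0]
      have : ∀ t : ℝ, t < f (-a) t := by
        refine sign_pos _ hna (fun hall => ?_)
        have := hall (τ a)
        rw [key] at this
        linarith
      exact this 0
    · exact absurd (τinj a 0 (by rw [h, τ0])) ha0
    · exact ⟨a, h⟩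
  obtain ⟨v₀, hv₀⟩ := hexpos
  -- minimal positive element s
  have hP : ({v : ℤ × ℤ | 0 < τ v ∧ τ v ≤ τ v₀}).Finite :=
    (hfin (τ v₀)).subset (fun v ⟨h1, h2⟩ => ⟨le_of_lt h1, h2⟩)
  obtain ⟨s, ⟨hs_pos, hs_le⟩, hs_min⟩ :=
    Set.exists_min_image _ τ hP ⟨v₀, hv₀, le_refl _⟩
  have hs_min' : ∀ v : ℤ × ℤ, 0 < τ v → τ s ≤ τ v := by
    intro v hv
    by_cases h : τ v ≤ τ v₀
    · exact hs_min v ⟨hv, h⟩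
    · exact le_trans hs_le (le_of_lt (not_le.1 h))
  have hs_all : ∀ t : ℝ, t < f s t := pos_all s hs_pos
  -- τ (n • s) is strictly increasing in n : ℕ
  have τmono : StrictMono (fun n : ℕ => τ (n • s)) := by
    apply strictMono_nat_of_lt_succ
    intro n
    have : ((n + 1) • s : ℤ × ℤ) = s + n • s := by rw [succ_nsmul, add_comm]
    simp only [hτ, this, hadd]
    exact hs_all _
  have τnn : ∀ n : ℕ, 0 ≤ τ (n • s) := by
    intro n
    have := τmono.monotone (Nat.zero_le n)
    simpa [zero_nsmul, τ0] using this
  -- every element with nonnegative τ is a natural multiple of s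
  have key : ∀ v : ℤ × ℤ, 0 ≤ τ v → ∃ n : ℕ, v = n • s := by
    intro v hv
    set N : Set ℕ := {n : ℕ | τ (n • s) ≤ τ v} with hN
    have hNfin : N.Finite := by
      have hsub : N ⊆ (fun n : ℕ => n • s) ⁻¹' {w : ℤ × ℤ | 0 ≤ τ w ∧ τ w ≤ τ v} :=
        fun n hn => ⟨τnn n, hn⟩
      have hinj : Function.Injective (fun n : ℕ => n • s) := fun n m h => by
        exact τmono.injective (by simpa using congrArg τ h)
      exact ((hfin (τ v)).preimage hinj.injOn).subset hsub
    have hN0 : (0:ℕ) ∈ N := by simp [hN, zero_nsmul, τ0, hv]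
    obtain ⟨n, hnN, hnmax⟩ := Set.exists_max_image N id hNfin ⟨0, hN0⟩
    have hlt : τ v < τ ((n + 1) • s) := by
      by_contra h
      have : n + 1 ∈ N := not_lt.1 h
      have h' := hnmax _ this
      simp only [id] at h'
      omega
    -- u := v - n • s satisfies 0 ≤ τ u < τ s
    set u : ℤ × ℤ := v - n • s with hu
    have hfu : f u (τ (n • s)) = τ v := by
      rw [hτ, ← hadd, hu, sub_add_cancel]
    have hu_nn : 0 ≤ τ u := by
      by_cases hu0 : u = 0
      · rw [hu0, τ0]
      · have hnotlt : ¬ (∀ t : ℝ, f u t < t) := by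
          intro hall
          have := hall (τ (n • s))
          rw [hfu] at this
          exact absurd hnN (not_le.2 this)
        exact le_of_lt (sign_pos u hu0 hnotlt 0)
    have hw : f (u - s) (τ ((n+1) • s)) = τ v := by
      rw [hτ, ← hadd]
      congr 1
      rw [hu]
      have : ((n + 1) • s : ℤ × ℤ) = n • s + s := succ_nsmul s n
      rw [this]
      ring_nf
    have hw0 : u - s ≠ 0 := by
      intro h
      rw [h, f0] at hw
      exact absurd hw (ne_of_gt hlt)
    have hwneg : ∀ t : ℝ, f (u - s) t < t := by
      rcases homeo_sign_lemma (f (u - s)) (hfree' _ hw0) with h1 | h2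
      · exfalso
        have h' := h1 (τ ((n+1) • s))
        rw [hw] at h'
        exact absurd hlt (not_lt.2 (le_of_lt h'))
      · exact h2
    have hu_lt : τ u < τ s := by
      have h1 : f (u - s) (τ s) = τ u := by
        rw [hτ, ← hadd, sub_add_cancel]
      have := hwneg (τ s)
      rw [h1] at this
      exact this
    -- minimality forces τ u = 0
    have hu0 : u = 0 := by
      rcases eq_or_lt_of_le hu_nn with h | h
      · exact τinj u 0 (by rw [← h, τ0])
      · exact absurd (hs_min' u h) (not_le.2 hu_lt)
    exact ⟨n, by rw [← sub_eq_zero, ← hu, hu0]⟩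
  -- every element is an integer multiple of s
  have all : ∀ v : ℤ × ℤ, ∃ n : ℤ, v = n • s := by
    intro v
    rcases le_or_gt 0 (τ v) with h | h
    · obtain ⟨n, hn⟩ := key v h
      exact ⟨(n : ℤ), by rw [hn, natCast_zsmul]⟩
    · have hv0 : v ≠ 0 := fun hv => by rw [hv, τ0] at h; exact lt_irrefl 0 h
      have hkey : f (-v) (τ v) = 0 := by
        rw [hτ, ← hadd, neg_add_cancel, f0]
      have hpos : 0 ≤ τ (-v) := by
        have : ∀ t : ℝ, t < f (-v) t := by
          refine sign_pos _ (neg_ne_zero.2 hv0) (fun hall => ?_)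
          have := hall (τ v)
          rw [hkey] at this
          linarith
        exact le_of_lt (this 0)
      obtain ⟨n, hn⟩ := key (-v) hpos
      refine ⟨-(n : ℤ), ?_⟩
      rw [neg_zsmul, natCast_zsmul, ← hn, neg_neg]
  -- contradiction: ℤ² is not cyclic
  obtain ⟨n, hn⟩ := all ((1:ℤ), (0:ℤ))
  obtain ⟨m, hm⟩ := all ((0:ℤ), (1:ℤ))
  obtain ⟨p, q⟩ := s
  have e1 : n * p = 1 := congrArg Prod.fst hn |>.symm
  have e2 : n * q = 0 := congrArg Prod.snd hn |>.symm
  have e3 : m * q = 1 := congrArg Prod.snd hm |>.symm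
  have : (1:ℤ) = 0 := by linear_combination -e1 + p * m * e2 - p * n * e3
  exact absurd this one_ne_zero
end
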